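/- In the commutative polynomial ring ℤ[x₁,x₂], the SL₃-Chebyshev polynomials satisfy P_{3,1}(P_{N,1}, P_{N,2}) = P_{N,1}³ − 3·P_{N,1}·P_{N,2} + 3 = P_{3N,1}, where P_{m,2}(x₁,x₂) = P_{m,1}(x₂,x₁). -/
import Mathlib

open MvPolynomial in
/-- The SL₃-Chebyshev polynomials `P_{m,1}`. -/
noncomputable def chebP : ℕ → MvPolynomial (Fin 2) ℤ
  | 0 => 3
  | 1 => X 0
  | 2 => X 0 ^ 2 - 2 * X 1
  | (m + 3) => X 0 * chebP (m + 2) - X 1 * chebP (m + 1) + chebP m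

/-- `P_{m,2}(x₁,x₂) = P_{m,1}(x₂,x₁)`. -/
noncomputable def chebP₂ (m : ℕ) : MvPolynomial (Fin 2) ℤ :=
  MvPolynomial.rename (Equiv.swap (0 : Fin 2) 1) (chebP m)

open MvPolynomial Matrix

-- universal 3x3 trace identity
lemma key3 {R : Type*} [CommRing R] (B : Matrix (Fin 3) (Fin 3) R) :
    (B ^ 3).trace = B.trace ^ 3 - 3 * B.trace * B.adjugate.trace + 3 * B.det := by
  rw [pow_succ, pow_two]
  simp [Matrix.trace_fin_three, Matrix.mul_apply, Fin.sum_univ_three,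
    Matrix.adjugate_fin_three, Matrix.det_fin_three]
  ring

noncomputable abbrev Smat := Matrix (Fin 3) (Fin 3) (MvPolynomial (Fin 2) ℤ)

noncomputable def Mc : Smat := !![0, 0, 1; 1, 0, -X 1; 0, 1, X 0]

lemma Mc_cube : Mc ^ 3 = (X 0 : MvPolynomial (Fin 2) ℤ) • Mc ^ 2 - (X 1 : MvPolynomial (Fin 2) ℤ) • Mc + 1 := by
  rw [pow_succ, pow_two]
  ext i j : 2
  fin_cases i <;> fin_cases j <;>
    simp [Mc, Matrix.mul_apply, Fin.sum_univ_three, Matrix.one_apply, Matrix.vecHead, Matrix.vecTail] <;> ring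

lemma trMc : ∀ m : ℕ, (Mc ^ m).trace = chebP m
  | 0 => by simp [chebP, Matrix.trace_fin_three]
  | 1 => by simp [chebP, Mc, Matrix.trace_fin_three]
  | 2 => by
      rw [pow_two]
      simp [chebP, Mc, Matrix.trace_fin_three, Matrix.mul_apply, Fin.sum_univ_three]
      ring
  | (m + 3) => by
      have : Mc ^ (m + 3) = (X 0 : MvPolynomial (Fin 2) ℤ) • Mc ^ (m + 2)
          - (X 1 : MvPolynomial (Fin 2) ℤ) • Mc ^ (m + 1) + Mc ^ m := by
        rw [show m + 3 = 3 + m from by ring, pow_add, Mc_cube, add_mul, sub_mul,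
          smul_mul_assoc, smul_mul_assoc, one_mul, ← pow_add, ← pow_succ',
          add_comm 2 m]
      rw [this, Matrix.trace_add, Matrix.trace_sub, Matrix.trace_smul, Matrix.trace_smul,
        trMc m, trMc (m + 1), trMc (m + 2)]
      rw [show chebP (m + 3) = X 0 * chebP (m + 2) - X 1 * chebP (m + 1) + chebP m from rfl]
      simp [smul_eq_mul]

lemma Mc_det : Mc.det = 1 := by
  simp [Mc, Matrix.det_fin_three]

noncomputable def Ac : Smat := Mc.adjugate

lemma Ac_eq : Ac = !![X 1, 1, 0; -X 0, 0, 1; 1, 0, 0] := by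
  rw [Ac, Mc, Matrix.adjugate_fin_three_of]
  ext i j
  fin_cases i <;> fin_cases j <;> simp

lemma Ac_cube : Ac ^ 3 = (X 1 : MvPolynomial (Fin 2) ℤ) • Ac ^ 2 - (X 0 : MvPolynomial (Fin 2) ℤ) • Ac + 1 := by
  rw [pow_succ, pow_two, Ac_eq]
  ext i j : 2
  fin_cases i <;> fin_cases j <;>
    simp [Matrix.mul_apply, Fin.sum_univ_three, Matrix.one_apply, Matrix.vecHead, Matrix.vecTail] <;> ring

lemma chebP₂_zero : chebP₂ 0 = 3 := by simp [chebP₂, chebP, map_ofNat]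
lemma chebP₂_one : chebP₂ 1 = X 1 := by
  simp [chebP₂, chebP, rename_X, Equiv.swap_apply_left]
lemma chebP₂_two : chebP₂ 2 = X 1 ^ 2 - 2 * X 0 := by
  simp [chebP₂, chebP, rename_X, Equiv.swap_apply_left, Equiv.swap_apply_right, map_ofNat]
lemma chebP₂_rec (m : ℕ) :
    chebP₂ (m + 3) = X 1 * chebP₂ (m + 2) - X 0 * chebP₂ (m + 1) + chebP₂ m := by
  simp only [chebP₂]
  rw [show chebP (m+3) = X 0 * chebP (m + 2) - X 1 * chebP (m + 1) + chebP m from rfl]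
  simp [rename_X, Equiv.swap_apply_left, Equiv.swap_apply_right, map_ofNat]

lemma trAc : ∀ m : ℕ, (Ac ^ m).trace = chebP₂ m
  | 0 => by simp [chebP₂_zero, Matrix.trace_fin_three]
  | 1 => by simp [chebP₂_one, Ac_eq, Matrix.trace_fin_three]
  | 2 => by
      rw [pow_two, chebP₂_two, Ac_eq]
      simp [Matrix.trace_fin_three, Matrix.mul_apply, Fin.sum_univ_three,
        Matrix.vecHead, Matrix.vecTail]
      ring
  | (m + 3) => by
      have : Ac ^ (m + 3) = (X 1 : MvPolynomial (Fin 2) ℤ) • Ac ^ (m + 2)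
          - (X 0 : MvPolynomial (Fin 2) ℤ) • Ac ^ (m + 1) + Ac ^ m := by
        rw [show m + 3 = 3 + m from by ring, pow_add, Ac_cube, add_mul, sub_mul,
          smul_mul_assoc, smul_mul_assoc, one_mul, ← pow_add, ← pow_succ',
          add_comm 2 m]
      rw [this, Matrix.trace_add, Matrix.trace_sub, Matrix.trace_smul, Matrix.trace_smul,
        trAc m, trAc (m + 1), trAc (m + 2), chebP₂_rec]
      simp [smul_eq_mul]

/-- `P_{3,1}(P_{N,1}, P_{N,2}) = P_{N,1}³ − 3·P_{N,1}·P_{N,2} + 3 = P_{3N,1}`. -/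
theorem chebP_three_comp (N : ℕ) :
    MvPolynomial.aeval ![chebP N, chebP₂ N] (chebP 3)
        = chebP N ^ 3 - 3 * (chebP N * chebP₂ N) + 3
      ∧ chebP N ^ 3 - 3 * (chebP N * chebP₂ N) + 3 = chebP (3 * N) := by
  constructor
  · rw [show chebP 3 = X 0 * chebP 2 - X 1 * chebP 1 + chebP 0 from rfl]
    simp [chebP, map_ofNat]
    ring
  · have h := key3 (Mc ^ N)
    rw [← pow_mul, mul_comm N 3, trMc, trMc, Matrix.adjugate_pow,
      show Mc.adjugate = Ac from rfl, trAc,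
      Matrix.det_pow, Mc_det, one_pow] at h
    rw [h]
    ring
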